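/- Let K be a field of characteristic ≠ 2 and t ∈ K, t ≠ 0. Let f = x_1² + t x_1 x_2 ∈ K[x_1,...,x_n] with n ≥ 2. Then the monomial x_1² does not lie in the ideal generated by the S_n-orbit of f. -/
import Mathlib

open MvPolynomial

/-- The ideal generated by the `S_n`-orbit of `f`. -/
noncomputable def symOrbitIdeal {K : Type*} [Field K] {n : ℕ} (f : MvPolynomial (Fin n) K) :
    Ideal (MvPolynomial (Fin n) K) :=
  Ideal.span {g | ∃ σ : Equiv.Perm (Fin n), g = rename σ f}

section Aux

variable {K : Type*} [Field K] {n : ℕ}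

/-- The linear functional `p ↦ 2t·(∑ᵢ coeff(xᵢ²) p) − ∑_{i≠j} coeff(xᵢxⱼ) p`. -/
noncomputable def Lmap (t : K) (n : ℕ) : MvPolynomial (Fin n) K →ₗ[K] K :=
  (2 * t) • (∑ i : Fin n, lcoeff K (Finsupp.single i 2)) -
    ∑ i : Fin n, ∑ j : Fin n,
      if i = j then 0 else lcoeff K (Finsupp.single i 1 + Finsupp.single j 1)

lemma Lmap_apply (t : K) (p : MvPolynomial (Fin n) K) :
    Lmap t n p = 2 * t * (∑ i : Fin n, coeff (Finsupp.single i 2) p) -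
      ∑ i : Fin n, ∑ j : Fin n,
        if i = j then 0 else coeff (Finsupp.single i 1 + Finsupp.single j 1) p := by
  simp [Lmap, Finset.sum_apply, lcoeff, Finset.mul_sum, apply_ite (fun φ :
    MvPolynomial (Fin n) K →ₗ[K] K => φ p)]

lemma mem_support_single (a i : Fin n) (k : ℕ) (hk : k ≠ 0) :
    a ∈ (Finsupp.single i k).support ↔ a = i := by
  simp [Finsupp.support_single_ne_zero i hk, eq_comm]

lemma coeff_sq_mul_XX (g : MvPolynomial (Fin n) K) (a b i : Fin n) (hab : a ≠ b) :
    coeff (Finsupp.single i 2) (g * X a * X b) = 0 := by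
  rw [coeff_mul_X']
  split_ifs with h
  · rw [mem_support_single _ _ _ (by norm_num)] at h
    subst h
    have h1 : Finsupp.single b 2 - Finsupp.single b 1 = Finsupp.single b 1 := by
      ext k; simp [Finsupp.single_apply]; split_ifs <;> omega
    rw [h1, coeff_mul_X']
    split_ifs with h2
    · rw [mem_support_single _ _ _ one_ne_zero] at h2; exact absurd h2 hab
    · rfl
  · rfl

lemma coeff_sq_mul_Xsq (g : MvPolynomial (Fin n) K) (a i : Fin n) :
    coeff (Finsupp.single i 2) (g * X a * X a) =
      if i = a then coeff 0 g else 0 := by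
  rw [coeff_mul_X']
  by_cases h : i = a
  · subst h
    rw [if_pos ((mem_support_single _ _ _ (by norm_num)).mpr rfl), if_pos rfl]
    have h1 : Finsupp.single i 2 - Finsupp.single i 1 = Finsupp.single i 1 := by
      ext k; simp [Finsupp.single_apply]; split_ifs <;> omega
    rw [h1, coeff_mul_X', if_pos ((mem_support_single _ _ _ one_ne_zero).mpr rfl)]
    congr 1
    ext k; simp [Finsupp.single_apply]
  · rw [if_neg, if_neg h]
    rw [mem_support_single _ _ _ (by norm_num)]
    exact fun hh => h hh.symm

lemma pair_sub (i j : Fin n) (hij : i ≠ j) :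
    (Finsupp.single i 1 + Finsupp.single j 1) - Finsupp.single j 1 =
      Finsupp.single i 1 := by
  ext k; simp [Finsupp.single_apply, Finsupp.tsub_apply]

lemma coeff_pair_mul_X (g : MvPolynomial (Fin n) K) (i j b : Fin n) (hij : i ≠ j) :
    coeff (Finsupp.single i 1 + Finsupp.single j 1) (g * X b) =
      if j = b then coeff (Finsupp.single i 1) g
      else if i = b then coeff (Finsupp.single j 1) g else 0 := by
  rw [coeff_mul_X']
  by_cases hj : j = b
  · subst hj
    rw [if_pos, if_pos rfl, pair_sub i j hij]
    simp [Finsupp.mem_support_iff, Finsupp.single_apply]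
  · by_cases hi : i = b
    · subst hi
      rw [if_pos, if_neg hj, if_pos rfl]
      have : Finsupp.single i 1 + Finsupp.single j 1 =
          Finsupp.single j 1 + Finsupp.single i 1 := add_comm _ _
      rw [this, pair_sub j i (Ne.symm hij)]
      simp [Finsupp.mem_support_iff, Finsupp.single_apply]
    · rw [if_neg, if_neg hj, if_neg hi]
      simp only [Finsupp.mem_support_iff, Finsupp.coe_add, Pi.add_apply,
        Finsupp.single_apply, ne_eq, not_not]
      simp [hi, hj]

lemma coeff_single_one_X (i a : Fin n) :
    coeff (Finsupp.single i 1) (X a : MvPolynomial (Fin n) K) =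
      if i = a then 1 else 0 := by
  rw [X, coeff_monomial]
  by_cases h : i = a
  · subst h; simp
  · rw [if_neg h, if_neg]
    intro hh
    exact h (Finsupp.single_left_injective one_ne_zero hh.symm)

lemma coeff_single_one_mul_X (g : MvPolynomial (Fin n) K) (i a : Fin n) :
    coeff (Finsupp.single i 1) (g * X a) = if i = a then coeff 0 g else 0 := by
  rw [coeff_mul_X']
  by_cases h : i = a
  · subst h
    rw [if_pos, if_pos rfl]
    · simp
    · simp [Finsupp.mem_support_iff, Finsupp.single_apply]
  · rw [if_neg, if_neg h]
    simp only [Finsupp.mem_support_iff, Finsupp.single_apply, ne_eq, not_not]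
    simp [h]

lemma coeff_pair_mul_XX (g : MvPolynomial (Fin n) K) (a b i j : Fin n)
    (hij : i ≠ j) :
    coeff (Finsupp.single i 1 + Finsupp.single j 1) (g * X a * X b) =
      if i = a ∧ j = b then coeff 0 g
      else if i = b ∧ j = a then coeff 0 g else 0 := by
  rw [coeff_pair_mul_X (g * X a) i j b hij, ]
  rw [show (Finsupp.single i 1 : Fin n →₀ ℕ) = Finsupp.single i 1 from rfl]
  rw [coeff_single_one_mul_X, coeff_single_one_mul_X]
  split_ifs <;> simp_all

lemma Lmap_mul_gen (t : K) (g : MvPolynomial (Fin n) K) (a b : Fin n) (hab : a ≠ b) :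
    Lmap t n (g * (X a ^ 2 + C t * X a * X b)) = 0 := by
  have h1 : g * (X a ^ 2 + C t * X a * X b) =
      g * X a * X a + C t * (g * X a * X b) := by ring
  rw [h1]
  have hA : ∀ p q : MvPolynomial (Fin n) K,
      Lmap t n (p + C t * q) = Lmap t n p + t * Lmap t n q := by
    intro p q
    rw [map_add]
    congr 1
    rw [← smul_eq_C_mul, map_smul, smul_eq_mul]
  rw [hA]
  have hs1 : Lmap t n (g * X a * X a) = 2 * t * coeff 0 g := by
    rw [Lmap_apply]
    have e1 : (∑ i : Fin n, coeff (Finsupp.single i 2) (g * X a * X a)) = coeff 0 g := by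
      simp only [coeff_sq_mul_Xsq g a]
      simp
    have e2 : (∑ i : Fin n, ∑ j : Fin n, if i = j then 0 else
        coeff (Finsupp.single i 1 + Finsupp.single j 1) (g * X a * X a)) = 0 := by
      apply Finset.sum_eq_zero; intro i _
      apply Finset.sum_eq_zero; intro j _
      split_ifs with h
      · rfl
      · rw [coeff_pair_mul_XX g a a i j h]
        split_ifs with h1
        · exact absurd (h1.1.trans h1.2.symm) h
        · rfl
    rw [e1, e2, sub_zero]
  have hs2 : Lmap t n (g * X a * X b) = -(2 * coeff 0 g) := by
    rw [Lmap_apply]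
    have e1 : (∑ i : Fin n, coeff (Finsupp.single i 2) (g * X a * X b)) = 0 := by
      apply Finset.sum_eq_zero; intro i _
      exact coeff_sq_mul_XX g a b i hab
    have e2 : (∑ i : Fin n, ∑ j : Fin n, if i = j then 0 else
        coeff (Finsupp.single i 1 + Finsupp.single j 1) (g * X a * X b)) =
        2 * coeff 0 g := by
      have step : ∀ i j : Fin n, (if i = j then 0 else
          coeff (Finsupp.single i 1 + Finsupp.single j 1) (g * X a * X b)) =
          (if j = b then if i = a then coeff 0 g else 0 else 0) +
          (if j = a then if i = b then coeff 0 g else 0 else 0) := by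
        intro i j
        by_cases hij : i = j
        · subst hij
          rw [if_pos rfl]
          split_ifs <;> simp_all
        · rw [if_neg hij, coeff_pair_mul_XX g a b i j hij]
          split_ifs <;> simp_all
      simp only [step, Finset.sum_add_distrib, Finset.sum_ite_eq',
        Finset.mem_univ, if_true]
      simp [two_mul]
    rw [e1, e2]
    ring
  rw [hs1, hs2]
  ring

lemma Lmap_Xsq (t : K) (i0 : Fin n) : Lmap t n ((X i0 : MvPolynomial (Fin n) K) ^ 2) = 2 * t := by
  rw [Lmap_apply]
  have hX : (X i0 : MvPolynomial (Fin n) K) ^ 2 = monomial (Finsupp.single i0 2) 1 := by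
    rw [X_pow_eq_monomial]
  rw [hX]
  have e1 : (∑ i : Fin n, coeff (Finsupp.single i 2)
      (monomial (Finsupp.single i0 2) (1 : K))) = 1 := by
    have : ∀ i : Fin n, coeff (Finsupp.single i 2)
        (monomial (Finsupp.single i0 2) (1 : K)) = if i = i0 then 1 else 0 := by
      intro i
      rw [coeff_monomial]
      by_cases h : i = i0
      · subst h; simp
      · rw [if_neg h, if_neg]
        intro hh
        exact h (Finsupp.single_left_injective (by norm_num) hh.symm)
    simp [this]
  have e2 : (∑ i : Fin n, ∑ j : Fin n, if i = j then 0 else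
      coeff (Finsupp.single i 1 + Finsupp.single j 1)
        (monomial (Finsupp.single i0 2) (1 : K))) = 0 := by
    apply Finset.sum_eq_zero; intro i _
    apply Finset.sum_eq_zero; intro j _
    split_ifs with h
    · rfl
    · rw [coeff_monomial, if_neg]
      intro hh
      have hj := DFunLike.congr_fun hh j
      simp [Finsupp.single_apply, Ne.symm h] at hj
      split_ifs at hj <;> omega
  rw [e1, e2]
  ring

end Aux

/-- Example 2.5: for `t ≠ 0` and `f = x_1² + t x_1 x_2`, the monomial `x_1²` does not lie
in the ideal generated by the `S_n`-orbit of `f` (for `n ≥ 2`, `char K ≠ 2`). -/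
theorem x1_sq_not_in_orbit_ideal (K : Type*) [Field K] (hchar : ringChar K ≠ 2)
    (t : K) (ht : t ≠ 0) (n : ℕ) (hn : 2 ≤ n) :
    (X (⟨0, by omega⟩ : Fin n)) ^ 2 ∉
      symOrbitIdeal ((X (⟨0, by omega⟩ : Fin n)) ^ 2
        + C t * X (⟨0, by omega⟩ : Fin n) * X (⟨1, by omega⟩ : Fin n)) := by
  intro hmem
  rw [symOrbitIdeal, Ideal.span] at hmem
  obtain ⟨c, hsupp, hsum⟩ := Submodule.mem_span_set.mp hmem
  have hL : Lmap t n ((X (⟨0, by omega⟩ : Fin n)) ^ 2) = 0 := by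
    rw [← hsum, Finsupp.sum, map_sum]
    apply Finset.sum_eq_zero
    intro p hp
    obtain ⟨σ, hσ⟩ := hsupp hp
    subst hσ
    rw [smul_eq_mul]
    have hr : rename (⇑σ) ((X (⟨0, by omega⟩ : Fin n)) ^ 2
        + C t * X (⟨0, by omega⟩ : Fin n) * X (⟨1, by omega⟩ : Fin n)) =
        X (σ ⟨0, by omega⟩) ^ 2 + C t * X (σ ⟨0, by omega⟩) * X (σ ⟨1, by omega⟩) := by
      simp [map_add, map_mul, map_pow]
    rw [hr]
    apply Lmap_mul_gen
    intro h
    have : (⟨0, by omega⟩ : Fin n) = ⟨1, by omega⟩ := σ.injective h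
    simp [Fin.ext_iff] at this
  rw [Lmap_Xsq] at hL
  exact (mul_ne_zero (Ring.two_ne_zero hchar) ht) hL
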